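/- Fubini theorem: let 𝓘 be a lower integral on A and 𝓙 a lower integral on B, and suppose A × B carries the product topology, i.e. 𝒪(A × B) is the least subset of functions A × B → 𝕊 containing all rectangles U × V (U ∈ 𝒪(A), V ∈ 𝒪(B)) and closed under enumerable joins. Then the two iterated integrals on A × B agree: for every f : A × B → ℝ_l⁺, 𝓘(a ↦ 𝓙(b ↦ f(a,b))) = 𝓙(b ↦ 𝓘(a ↦ f(a,b))). -/

import Mathlib

/-- The initial σ-frame `𝕊`, as the least subset of the propositions `Ω = Prop`
containing `False` and `True` and closed under joins of increasing ω-chains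
(equivalently, the image of the free ω-cpo completion of `𝔹 = {⊥ ≤ ⊤}` in `Ω`). -/
inductive InS : Prop → Prop
  | bot : InS False
  | top : InS True
  | sup (c : ℕ → Prop) (mono : ∀ n, c n → c (n + 1)) (h : ∀ n, InS (c n)) :
      InS (∃ n, c n)

theorem InS.of_decidable (p : Prop) [Decidable p] : InS p := by
  by_cases h : p
  · rw [eq_true h]; exact InS.top
  · rw [eq_false h]; exact InS.bot

/-- A map between preorders is ω-(Scott-)continuous if it is monotone and preserves
least upper bounds of enumerable directed subsets. -/
def OmegaContinuous {C D : Type} [Preorder C] [Preorder D] (f : C → D) : Prop :=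
  Monotone f ∧
    ∀ (U : Set C) (x : C), U.Countable → U.Nonempty → DirectedOn (· ≤ ·) U →
      IsLUB U x → IsLUB (f '' U) (f x)

/-- A preorder is an ω-cpo if every enumerable directed subset has a least upper bound. -/
def IsOmegaCPO (C : Type) [Preorder C] : Prop :=
  ∀ U : Set C, U.Countable → U.Nonempty → DirectedOn (· ≤ ·) U → ∃ x, IsLUB U x

/-- A cover-preserving monotone map from an ω-cpo presentation `(P, Cov)` into an
ordered set: the image of each cover has a least upper bound above the image of the
covered element. -/
def CovMorphism {P C : Type} [Preorder P] [Preorder C]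
    (Cov : P → Set P → Prop) (f : P → C) : Prop :=
  Monotone f ∧ ∀ p U, Cov p U → ∃ s, IsLUB (f '' U) s ∧ f p ≤ s

/-- `(Pω, η)` is the free ω-cpo completion of the ω-cpo presentation `(P, Cov)`:
`Pω` is an ω-cpo, `η` is a cover-preserving monotone map, and every cover-preserving
monotone map from `P` into an ω-cpo extends uniquely to an ω-continuous map on `Pω`. -/
structure IsFreeOmegaCompletion {P : Type} [Preorder P] (Cov : P → Set P → Prop)
    (Pω : Type) [PartialOrder Pω] (η : P → Pω) : Prop where
  cpo : IsOmegaCPO Pω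
  eta_morph : CovMorphism Cov η
  extend_unique : ∀ (C : Type) [PartialOrder C], IsOmegaCPO C →
    ∀ f : P → C, CovMorphism Cov f →
      ∃! g : Pω → C, OmegaContinuous g ∧ ∀ p, g (η p) = f p

/-- The Sierpinski space as a subtype of the propositions, ordered by implication. -/
abbrev Sierp := {p : Prop // InS p}

theorem InS.or {p q : Prop} (hp : InS p) (hq : InS q) : InS (p ∨ q) := by
  induction hp with
  | bot => simp only [false_or]; exact hq
  | top => simp only [true_or]; exact InS.top
  | sup c mono h ih =>
      have e : ((∃ n, c n) ∨ q) = (∃ n, c n ∨ q) := propext <| by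
        constructor
        · rintro (⟨n, hn⟩ | hq')
          · exact ⟨n, Or.inl hn⟩
          · exact ⟨0, Or.inr hq'⟩
        · rintro ⟨n, hn | hq'⟩
          · exact Or.inl ⟨n, hn⟩
          · exact Or.inr hq'
      rw [e]
      exact InS.sup _ (fun n => Or.imp_left (mono n)) ih

theorem InS.and {p q : Prop} (hp : InS p) (hq : InS q) : InS (p ∧ q) := by
  induction hp with
  | bot => simp only [false_and]; exact InS.bot
  | top => simp only [true_and]; exact hq
  | sup c mono h ih =>
      have e : ((∃ n, c n) ∧ q) = (∃ n, c n ∧ q) := propext <| by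
        constructor
        · rintro ⟨⟨n, hn⟩, hq'⟩
          exact ⟨n, hn, hq'⟩
        · rintro ⟨n, hn, hq'⟩
          exact ⟨⟨n, hn⟩, hq'⟩
      rw [e]
      exact InS.sup _ (fun n => And.imp_left (mono n)) ih

theorem InS.exists_nat (p : ℕ → Prop) (h : ∀ n, InS (p n)) : InS (∃ n, p n) := by
  have key : ∀ m, InS (∃ k, k ≤ m ∧ p k) := by
    intro m
    induction m with
    | zero =>
        have e : (∃ k, k ≤ 0 ∧ p k) = p 0 := propext <| by
          constructor
          · rintro ⟨k, hk, hp⟩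
            rwa [Nat.le_zero.mp hk] at hp
          · exact fun hp => ⟨0, le_refl _, hp⟩
        rw [e]; exact h 0
    | succ m ih =>
        have e : (∃ k, k ≤ m + 1 ∧ p k) = ((∃ k, k ≤ m ∧ p k) ∨ p (m + 1)) :=
          propext <| by
            constructor
            · rintro ⟨k, hk, hp⟩
              rcases Nat.eq_or_lt_of_le hk with rfl | hk'
              · exact Or.inr hp
              · exact Or.inl ⟨k, Nat.lt_succ_iff.mp hk', hp⟩
            · rintro (⟨k, hk, hp⟩ | hp)
              · exact ⟨k, hk.trans (Nat.le_succ m), hp⟩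
              · exact ⟨m + 1, le_refl _, hp⟩
        rw [e]; exact ih.or (h (m + 1))
  have e : (∃ n, p n) = (∃ m, ∃ k, k ≤ m ∧ p k) := propext <| by
    constructor
    · rintro ⟨n, hn⟩
      exact ⟨n, n, le_refl _, hn⟩
    · rintro ⟨m, k, _, hk⟩
      exact ⟨k, hk⟩
  rw [e]
  exact InS.sup _ (fun m ⟨k, hk, hp⟩ => ⟨k, hk.trans (Nat.le_succ m), hp⟩) key

def Sierp.botS : Sierp := ⟨False, InS.bot⟩
def Sierp.topS : Sierp := ⟨True, InS.top⟩
def Sierp.or (s t : Sierp) : Sierp := ⟨s.1 ∨ t.1, s.2.or t.2⟩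
def Sierp.and (s t : Sierp) : Sierp := ⟨s.1 ∧ t.1, s.2.and t.2⟩

/-- Enumerable joins in the Sierpinski space. -/
def Sierp.joinSeq (s : ℕ → Sierp) : Sierp :=
  ⟨∃ n, (s n).1, InS.exists_nat _ (fun n => (s n).2)⟩

/-- A lower real: an `𝕊`-valued, inhabited, rounded, downward-closed cut of rationals. -/
structure LowerReal where
  cut : ℚ → Prop
  inS : ∀ q, InS (cut q)
  inhab : ∃ q, cut q
  rounded : ∀ q, cut q → ∃ q', q < q' ∧ cut q'
  lower : ∀ q q', q < q' → cut q' → cut q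

instance : Preorder LowerReal where
  le L₁ L₂ := ∀ q, L₁.cut q → L₂.cut q
  le_refl _ _ h := h
  le_trans _ _ _ h₁ h₂ q hq := h₂ q (h₁ q hq)

/-- The lower real associated to a rational number. -/
def ratLR (q : ℚ) : LowerReal where
  cut p := p < q
  inS _ := InS.of_decidable _
  inhab := ⟨q - 1, by linarith⟩
  rounded p hp := ⟨(p + q) / 2, by constructor <;> linarith⟩
  lower _ _ h h' := lt_trans h h'

/-- The non-negative rationals. -/
abbrev QPlus := {q : ℚ // 0 ≤ q}

/-- The non-negative lower reals `ℝ_l⁺`. -/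
abbrev NNLowerReal := {L : LowerReal // ∀ q : ℚ, q < 0 → L.cut q}

/-- The non-negative lower real associated to a non-negative rational. -/
def ratNN (q : QPlus) : NNLowerReal :=
  ⟨ratLR q.1, fun _ hp => lt_of_lt_of_le hp q.2⟩

def zeroNN : NNLowerReal := ratNN ⟨0, le_refl 0⟩
def oneNN : NNLowerReal := ratNN ⟨1, by norm_num⟩

/-- `r : 𝕊 → ℝ_l⁺`, the unique ω-continuous map with `r ⊥ = 0` and `r ⊤ = 1`;
`indicatorLR (U a)` is the real indicator function `𝟙_U` of an open `U`. -/
def indicatorLR (s : Sierp) : NNLowerReal :=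
  ⟨{ cut := fun q => q < 0 ∨ (s.1 ∧ q < 1)
     inS := fun q => by
       show InS (q < 0 ∨ (s.1 ∧ q < 1))
       by_cases h0 : q < 0
       · rw [eq_true (Or.inl h0 : q < 0 ∨ (s.1 ∧ q < 1))]; exact InS.top
       · rw [eq_false h0, false_or]
         by_cases h1 : q < 1
         · rw [eq_true h1, and_true]; exact s.2
         · rw [eq_false h1, and_false]; exact InS.bot
     inhab := ⟨-1, Or.inl (by norm_num)⟩
     rounded := fun q hq => by
       rcases hq with h | ⟨hs, h1⟩
       · exact ⟨q / 2, by linarith, Or.inl (by linarith)⟩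
       · exact ⟨(q + 1) / 2, by
           constructor
           · linarith
           · exact Or.inr ⟨hs, by linarith⟩⟩
     lower := fun q q' h hq' => by
       rcases hq' with h' | ⟨hs, h1⟩
       · exact Or.inl (lt_trans h h')
       · by_cases h0 : q < 0
         · exact Or.inl h0
         · exact Or.inr ⟨hs, lt_trans h h1⟩ },
   fun q hq => Or.inl hq⟩

/-- Specification of the addition on the non-negative lower reals: ω-continuous in
each argument and extending addition of non-negative rationals. -/
def AddSpecNN (add : NNLowerReal → NNLowerReal → NNLowerReal) : Prop :=
  (∀ L, OmegaContinuous (add L)) ∧ (∀ L, OmegaContinuous (fun x => add x L)) ∧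
    ∀ q q' : QPlus, add (ratNN q) (ratNN q') = ratNN ⟨q.1 + q'.1, add_nonneg q.2 q'.2⟩

/-- Specification of the multiplication on the non-negative lower reals: ω-continuous
in each argument and extending multiplication of non-negative rationals. -/
def MulSpecNN (mul : NNLowerReal → NNLowerReal → NNLowerReal) : Prop :=
  (∀ L, OmegaContinuous (mul L)) ∧ (∀ L, OmegaContinuous (fun x => mul x L)) ∧
    ∀ q q' : QPlus, mul (ratNN q) (ratNN q') = ratNN ⟨q.1 * q'.1, mul_nonneg q.2 q'.2⟩

/-- A lower integral on `A`: an ω-continuous, bottom-preserving, additive map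
`(A → ℝ_l⁺) → ℝ_l⁺`. -/
def IsLowerIntegral {A : Type} (add : NNLowerReal → NNLowerReal → NNLowerReal)
    (I : (A → NNLowerReal) → NNLowerReal) : Prop :=
  OmegaContinuous I ∧ I (fun _ => zeroNN) = zeroNN ∧
    ∀ f g : A → NNLowerReal, I (fun a => add (f a) (g a)) = add (I f) (I g)

/-- A valuation on `A`: an ω-continuous, bottom-preserving, modular map
`𝒪(A) = (A → 𝕊) → ℝ_l⁺`. -/
def IsValuation {A : Type} (add : NNLowerReal → NNLowerReal → NNLowerReal)
    (μ : (A → Sierp) → NNLowerReal) : Prop :=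
  OmegaContinuous μ ∧ μ (fun _ => Sierp.botS) = zeroNN ∧
    ∀ U V : A → Sierp,
      add (μ U) (μ V) =
        add (μ (fun a => (U a).or (V a))) (μ (fun a => (U a).and (V a)))

/-- The open rectangle `U × V` in `A × B`. -/
def rectangle {A B : Type} (U : A → Sierp) (V : B → Sierp) : A × B → Sierp :=
  fun ab => (U ab.1).and (V ab.2)

/-!
Classically every proposition lies in `𝕊`, and `ℝ_l⁺` is order-isomorphic to `ℝ≥0∞`; the
addition is forced by its values on rationals and ω-continuity, so a lower integral becomes an
additive `ℝ≥0∞`-valued functional preserving countable directed suprema, hence positively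
homogeneous. Both iterated integrals are such functionals on `A × B`, and by the Riesz argument
(approximation by simple functions) they agree as soon as they agree on indicator functions.
On a rectangle both give `𝓘(𝟙_U) · 𝓙(𝟙_V)`; inclusion–exclusion, with cancellation of finite
values, extends this to finite unions of rectangles and continuity to countable unions, which by
the product-topology hypothesis exhaust all subsets of `A × B`.
-/

open Set
open scoped ENNReal NNReal NNRat

theorem Real.toNNReal_nnratCast (q : ℚ≥0) : Real.toNNReal ((q : ℚ) : ℝ) = q := by
  ext
  rw [Real.coe_toNNReal _ (by positivity)]
  norm_cast

theorem ENNReal.iSup_nnratCast_le_eq (c : ℝ≥0∞) :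
    ⨆ q : {q : ℚ≥0 // ((q : ℝ≥0) : ℝ≥0∞) ≤ c}, ((q.1 : ℝ≥0) : ℝ≥0∞) = c := by
  refine le_antisymm (iSup_le fun q => q.2) (le_of_forall_lt fun r hr => ?_)
  obtain ⟨q, hq, hrq, hqc⟩ := ENNReal.lt_iff_exists_rat_btwn.1 hr
  lift q to ℚ≥0 using hq
  rw [Real.toNNReal_nnratCast] at hrq hqc
  exact hrq.trans_le (le_iSup_of_le ⟨q, hqc.le⟩ le_rfl)

theorem eq_partialSups_of_modular {α : Type*} [DistribLattice α] {μ ν : α → ℝ≥0∞}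
    (hμ : Monotone μ) (hν : Monotone ν)
    (hμ_modular : ∀ a b, μ (a ⊔ b) + μ (a ⊓ b) = μ a + μ b)
    (hν_modular : ∀ a b, ν (a ⊔ b) + ν (a ⊓ b) = ν a + ν b)
    {P : Set α} (hP : InfClosed P) (hμν : EqOn μ ν P) {s : ℕ → α} (hs : ∀ i, s i ∈ P)
    (n : ℕ) : μ (partialSups s n) = ν (partialSups s n) := by
  induction n generalizing s with
  | zero => simpa using hμν (hs 0)
  | succ n ih =>
    set a := partialSups s n
    set b := s (n + 1)
    have hinf : a ⊓ b = partialSups (fun i => s i ⊓ b) n := by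
      simp only [a, partialSups_eq_sup'_range, Finset.sup'_inf_distrib_right]
    have ha : μ a = ν a := ih hs
    have hb : μ b = ν b := hμν (hs (n + 1))
    have hab : μ (a ⊓ b) = ν (a ⊓ b) := hinf ▸ ih fun i => hP (hs i) (hs (n + 1))
    rw [partialSups_add_one]
    by_cases htop : μ (a ⊓ b) = ⊤
    · have hμtop := top_unique (htop ▸ hμ inf_le_sup)
      have hνtop := top_unique ((hab ▸ htop) ▸ hν inf_le_sup)
      rw [hμtop, hνtop]
    · refine (ENNReal.add_left_inj htop).1 ?_
      rw [hμ_modular, ha, hb, ← hν_modular, ← hab]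

structure IsENNLowerIntegral {X : Type} (Φ : (X → ℝ≥0∞) → ℝ≥0∞) : Prop where
  map_zero : Φ 0 = 0
  map_add : ∀ f g, Φ (f + g) = Φ f + Φ g
  mono : Monotone Φ
  map_iSup : ∀ {ι : Type} [Countable ι] [Nonempty ι] (u : ι → X → ℝ≥0∞),
    Directed (· ≤ ·) u → Φ (⨆ i, u i) = ⨆ i, Φ (u i)

namespace IsENNLowerIntegral

variable {X Y : Type} {Φ Φ' : (X → ℝ≥0∞) → ℝ≥0∞} {Ψ : (Y → ℝ≥0∞) → ℝ≥0∞}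

def toAddMonoidHom (hΦ : IsENNLowerIntegral Φ) : (X → ℝ≥0∞) →+ ℝ≥0∞ where
  toFun := Φ
  map_zero' := hΦ.map_zero
  map_add' := hΦ.map_add

theorem map_nsmul (hΦ : IsENNLowerIntegral Φ) (n : ℕ) (f : X → ℝ≥0∞) :
    Φ (n • f) = n • Φ f :=
  _root_.map_nsmul hΦ.toAddMonoidHom n f

theorem map_nnratCast_smul (hΦ : IsENNLowerIntegral Φ) (q : ℚ≥0) (f : X → ℝ≥0∞) :
    Φ (((q : ℝ≥0) : ℝ≥0∞) • f) = (q : ℝ≥0) * Φ f := by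
  have hden : (q.den : ℝ≥0∞) * (q : ℝ≥0) = q.num := by
    exact_mod_cast congrArg (fun x : ℚ≥0 => (x : ℝ≥0)) (NNRat.den_mul_eq_num q)
  rw [← ENNReal.mul_right_inj (a := q.den) (by simp) (by simp), ← mul_assoc, hden,
    ← nsmul_eq_mul, ← hΦ.map_nsmul, ← Nat.cast_smul_eq_nsmul ℝ≥0∞, smul_smul, hden,
    Nat.cast_smul_eq_nsmul, hΦ.map_nsmul, nsmul_eq_mul]

theorem map_smul (hΦ : IsENNLowerIntegral Φ) (c : ℝ≥0∞) (f : X → ℝ≥0∞) :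
    Φ (c • f) = c * Φ f := by
  have : Nonempty {q : ℚ≥0 // ((q : ℝ≥0) : ℝ≥0∞) ≤ c} := ⟨⟨0, by simp⟩⟩
  have hsmul : c • f = ⨆ q : {q : ℚ≥0 // ((q : ℝ≥0) : ℝ≥0∞) ≤ c}, ((q.1 : ℝ≥0) : ℝ≥0∞) • f := by
    ext x
    simp only [Pi.smul_apply, smul_eq_mul, iSup_apply, ← ENNReal.iSup_mul,
      ENNReal.iSup_nnratCast_le_eq]
  have hdir : Directed (· ≤ ·)
      fun q : {q : ℚ≥0 // ((q : ℝ≥0) : ℝ≥0∞) ≤ c} => ((q.1 : ℝ≥0) : ℝ≥0∞) • f :=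
    Monotone.directed_le fun q q' h x => mul_le_mul_left (by exact_mod_cast h) (f x)
  rw [hsmul, hΦ.map_iSup _ hdir]
  simp only [hΦ.map_nnratCast_smul, ← ENNReal.iSup_mul, ENNReal.iSup_nnratCast_le_eq]

theorem map (hΦ : IsENNLowerIntegral Φ) (σ : X → Y) :
    IsENNLowerIntegral fun h : Y → ℝ≥0∞ => Φ (h ∘ σ) where
  map_zero := hΦ.map_zero
  map_add f g := hΦ.map_add (f ∘ σ) (g ∘ σ)
  mono _ _ h := hΦ.mono fun x => h (σ x)
  map_iSup u hu := by
    have hcomp : (⨆ i, u i) ∘ σ = ⨆ i, u i ∘ σ := by ext; simp [iSup_apply]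
    rw [hcomp]
    exact hΦ.map_iSup (fun i => u i ∘ σ) (hu.mono_comp (g := (· ∘ σ)) _ fun _ _ h x => h (σ x))

theorem iterate (hΦ : IsENNLowerIntegral Φ) (hΨ : IsENNLowerIntegral Ψ) :
    IsENNLowerIntegral fun h : X × Y → ℝ≥0∞ => Φ fun x => Ψ fun y => h (x, y) where
  map_zero := by simpa [← Pi.zero_def, hΨ.map_zero] using hΦ.map_zero
  map_add f g := by
    simp only [Pi.add_apply]
    rw [← hΦ.map_add]
    exact congrArg Φ (funext fun x => hΨ.map_add (fun y => f (x, y)) (fun y => g (x, y)))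
  mono _ _ h := hΦ.mono fun x => hΨ.mono fun y => h (x, y)
  map_iSup u hu := by
    have hinner : ∀ x, Ψ (fun y => (⨆ i, u i) (x, y)) = ⨆ i, Ψ fun y => u i (x, y) := by
      intro x
      rw [← hΨ.map_iSup (fun i y => u i (x, y))
        (hu.mono_comp (g := fun v y => v (x, y)) _ fun _ _ h y => h (x, y))]
      congr 1; ext; simp [iSup_apply]
    have hdir : Directed (· ≤ ·) fun i x => Ψ fun y => u i (x, y) :=
      hu.mono_comp (g := fun v x => Ψ fun y => v (x, y)) _ fun _ _ h x => hΨ.mono fun y => h (x, y)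
    simp only [hinner, ← hΦ.map_iSup _ hdir]
    congr 1; ext; simp [iSup_apply]

theorem iterate_indicator_prod (hΦ : IsENNLowerIntegral Φ) (hΨ : IsENNLowerIntegral Ψ)
    (U : Set X) (V : Set Y) :
    (Φ fun x => Ψ fun y => (U ×ˢ V).indicator 1 (x, y)) =
      Φ (U.indicator 1) * Ψ (V.indicator 1) := by
  simp only [Set.indicator_prod_one]
  calc (Φ fun x => Ψ fun y => U.indicator 1 x * V.indicator 1 y)
      = Φ fun x => U.indicator 1 x * Ψ (V.indicator 1) :=
        congrArg Φ (funext fun x => hΨ.map_smul _ _)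
    _ = Φ (U.indicator 1) * Ψ (V.indicator 1) := by
        simp_rw [mul_comm _ (Ψ _)]
        exact hΦ.map_smul _ _

theorem monotone_indicator (hΦ : IsENNLowerIntegral Φ) :
    Monotone fun s : Set X => Φ (s.indicator 1) :=
  fun _ _ h => hΦ.mono (Set.indicator_le_indicator_of_subset h fun _ => zero_le)

theorem indicator_union_add_inter (hΦ : IsENNLowerIntegral Φ) (s t : Set X) :
    Φ ((s ∪ t).indicator 1) + Φ ((s ∩ t).indicator 1) =
      Φ (s.indicator 1) + Φ (t.indicator 1) := by
  rw [← hΦ.map_add, ← hΦ.map_add, Set.indicator_union_add_inter]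

theorem indicator_iUnion_eq (hΦ : IsENNLowerIntegral Φ) (hΦ' : IsENNLowerIntegral Φ')
    {P : Set (Set X)} (hP : InfClosed P)
    (hPeq : ∀ s ∈ P, Φ (s.indicator 1) = Φ' (s.indicator 1)) {s : ℕ → Set X}
    (hs : ∀ n, s n ∈ P) :
    Φ ((⋃ n, s n).indicator 1) = Φ' ((⋃ n, s n).indicator 1) := by
  have hunion : (⋃ n, s n).indicator 1 = ⨆ n, (partialSups s n).indicator (1 : X → ℝ≥0∞) := by
    have hU : ⋃ n, s n = ⋃ n, partialSups s n := (iSup_partialSups_eq s).symm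
    ext x
    rw [hU, iSup_apply, Set.indicator_iUnion_apply rfl]
  have hdir : Directed (· ≤ ·) fun n => (partialSups s n).indicator (1 : X → ℝ≥0∞) :=
    Monotone.directed_le fun _ _ h =>
      Set.indicator_le_indicator_of_subset (partialSups_monotone s h) fun _ => zero_le
  rw [hunion, hΦ.map_iSup _ hdir, hΦ'.map_iSup _ hdir]
  exact iSup_congr fun n => eq_partialSups_of_modular hΦ.monotone_indicator
    hΦ'.monotone_indicator hΦ.indicator_union_add_inter hΦ'.indicator_union_add_inter hP
    hPeq hs n

theorem ext_of_indicator (hΦ : IsENNLowerIntegral Φ) (hΦ' : IsENNLowerIntegral Φ')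
    (h : ∀ s : Set X, Φ (s.indicator 1) = Φ' (s.indicator 1)) : Φ = Φ' := by
  let _ : MeasurableSpace X := ⊤
  funext f
  refine Measurable.ennreal_induction (motive := fun f => Φ f = Φ' f)
    (fun c s _ => ?_) (fun f g _ _ _ hf hg => ?_) (fun u _ hu hu_eq => ?_) Measurable.of_discrete
  · have hc : (s.indicator fun _ => c) = c • s.indicator 1 := by
      ext x; by_cases hx : x ∈ s <;> simp [hx]
    rw [hc, hΦ.map_smul, hΦ'.map_smul, h]
  · rw [hΦ.map_add, hΦ'.map_add, hf, hg]
  · have hsup : (fun x => ⨆ n, u n x) = ⨆ n, u n := by ext; simp [iSup_apply]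
    rw [hsup, hΦ.map_iSup _ hu.directed_le, hΦ'.map_iSup _ hu.directed_le]
    exact iSup_congr hu_eq

theorem iterate_comm (hΦ : IsENNLowerIntegral Φ) (hΨ : IsENNLowerIntegral Ψ)
    (hrect : ∀ S : Set (X × Y), ∃ (U : ℕ → Set X) (V : ℕ → Set Y), S = ⋃ n, U n ×ˢ V n)
    (g : X × Y → ℝ≥0∞) :
    (Φ fun x => Ψ fun y => g (x, y)) = Ψ fun y => Φ fun x => g (x, y) := by
  have hswap := (hΨ.iterate hΦ).map Prod.swap
  refine congrFun (ext_of_indicator (hΦ.iterate hΨ) hswap fun S => ?_) g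
  obtain ⟨U, V, rfl⟩ := hrect S
  refine indicator_iUnion_eq (hΦ.iterate hΨ) hswap (P := {S | ∃ U V, U ×ˢ V = S}) ?_ ?_
    fun n => ⟨U n, V n, rfl⟩
  · rintro _ ⟨U, V, rfl⟩ _ ⟨U', V', rfl⟩
    exact ⟨U ∩ U', V ∩ V', Set.prod_inter_prod.symm⟩
  · rintro _ ⟨U, V, rfl⟩
    have hswapped : ∀ y x, (U ×ˢ V).indicator (1 : X × Y → ℝ≥0∞) (x, y) =
        (V ×ˢ U).indicator 1 (y, x) := by
      intro y x
      simp only [Set.indicator_prod_one, mul_comm]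
    rw [hΦ.iterate_indicator_prod hΨ]
    simp only [Function.comp_def, Prod.swap, hswapped]
    rw [hΨ.iterate_indicator_prod hΦ, mul_comm]

end IsENNLowerIntegral

theorem InS.of_classical (p : Prop) : InS p := by
  classical exact InS.of_decidable p

namespace NNLowerReal

theorem ext {x y : NNLowerReal} (h : ∀ q, x.1.cut q ↔ y.1.cut q) : x = y := by
  obtain ⟨⟨cx, _, _, _, _⟩, _⟩ := x
  obtain ⟨⟨cy, _, _, _, _⟩, _⟩ := y
  obtain rfl : cx = cy := funext fun q => propext (h q)
  rfl

noncomputable def ofENNReal (y : ℝ≥0∞) : NNLowerReal :=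
  ⟨{ cut := fun q => q < 0 ∨ ENNReal.ofReal q < y
     inS := fun _ => InS.of_classical _
     inhab := ⟨-1, Or.inl (by norm_num)⟩
     rounded := by
       rintro q (hq | hq)
       · exact ⟨q / 2, by linarith, Or.inl (by linarith)⟩
       · obtain ⟨r, -, hqr, hry⟩ := ENNReal.lt_iff_exists_rat_btwn.1 hq
         exact ⟨r, by exact_mod_cast (ENNReal.ofReal_lt_ofReal_iff'.1 hqr).1, Or.inr hry⟩
     lower := by
       rintro q q' hqq' (hq' | hq')
       · exact Or.inl (hqq'.trans hq')
       · exact Or.inr ((ENNReal.ofReal_le_ofReal (by exact_mod_cast hqq'.le)).trans_lt hq') },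
   fun _ => Or.inl⟩

noncomputable def toENNReal (x : NNLowerReal) : ℝ≥0∞ := ⨆ (q : ℚ) (_ : x.1.cut q), ENNReal.ofReal q

theorem cut_iff_lt_toENNReal (x : NNLowerReal) (q : ℚ) :
    x.1.cut q ↔ q < 0 ∨ ENNReal.ofReal q < toENNReal x := by
  refine ⟨fun hq => or_iff_not_imp_left.2 fun hq0 => ?_, ?_⟩
  · obtain ⟨q', hqq', hq'⟩ := x.1.rounded q hq
    have hlt : ENNReal.ofReal q < ENNReal.ofReal q' :=
      ENNReal.ofReal_lt_ofReal_iff'.2 ⟨by exact_mod_cast hqq', by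
        exact_mod_cast (not_lt.1 hq0).trans_lt hqq'⟩
    exact hlt.trans_le (le_iSup₂ (f := fun q (_ : x.1.cut q) => ENNReal.ofReal q) q' hq')
  · rintro (hq | hq)
    · exact x.2 q hq
    · simp only [toENNReal, lt_iSup_iff] at hq
      obtain ⟨q', hq', hlt⟩ := hq
      exact x.1.lower q q' (by exact_mod_cast (ENNReal.ofReal_lt_ofReal_iff'.1 hlt).1) hq'

theorem ofENNReal_toENNReal (x : NNLowerReal) : ofENNReal (toENNReal x) = x :=
  ext fun q => (cut_iff_lt_toENNReal x q).symm

theorem toENNReal_ofENNReal (y : ℝ≥0∞) : toENNReal (ofENNReal y) = y := by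
  refine le_antisymm (iSup₂_le fun q hq => ?_) (le_of_forall_lt fun r hr => ?_)
  · rcases hq with hq | hq
    · simp [ENNReal.ofReal_eq_zero.2 (by exact_mod_cast hq.le : (q : ℝ) ≤ 0)]
    · exact hq.le
  · obtain ⟨q, -, hrq, hqy⟩ := ENNReal.lt_iff_exists_rat_btwn.1 hr
    exact hrq.trans_le
      (le_iSup₂ (f := fun q (_ : (ofENNReal y).1.cut q) => ENNReal.ofReal q) q (Or.inr hqy))

abbrev _root_.NNRat.toNNLowerReal (q : ℚ≥0) : NNLowerReal := ratNN ⟨q, q.coe_nonneg⟩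

noncomputable def orderIsoENNReal : NNLowerReal ≃o ℝ≥0∞ :=
  Equiv.toOrderIso ⟨toENNReal, ofENNReal, ofENNReal_toENNReal, toENNReal_ofENNReal⟩
    (fun _ _ h => iSup₂_mono' fun q hq => ⟨q, h q hq, le_rfl⟩)
    (fun _ _ h _ => Or.imp_right fun hq => hq.trans_le h)

theorem orderIsoENNReal_toNNLowerReal (q : ℚ≥0) : orderIsoENNReal q.toNNLowerReal = (q : ℝ≥0) := by
  rw [← orderIsoENNReal.eq_symm_apply, ← Real.toNNReal_nnratCast]
  refine ext fun p => ?_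
  change p < (q : ℚ) ↔ p < 0 ∨ ENNReal.ofReal p < ENNReal.ofReal ((q : ℚ) : ℝ)
  rw [ENNReal.ofReal_lt_ofReal_iff']
  constructor
  · intro hpq
    rcases lt_or_ge p 0 with hp | hp
    · exact Or.inl hp
    · exact Or.inr ⟨by exact_mod_cast hpq, by exact_mod_cast hp.trans_lt hpq⟩
  · rintro (hp | ⟨hpq, -⟩)
    · exact hp.trans_le q.coe_nonneg
    · exact_mod_cast hpq

theorem orderIsoENNReal_zeroNN : orderIsoENNReal zeroNN = 0 := by
  convert orderIsoENNReal_toNNLowerReal 0 using 1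
  · rfl
  · simp

end NNLowerReal

open NNLowerReal

theorem isLUB_range_toNNLowerReal (x : NNLowerReal) :
    IsLUB (range fun q : {q : ℚ≥0 // ((q : ℝ≥0) : ℝ≥0∞) ≤ orderIsoENNReal x} =>
      q.1.toNNLowerReal) x := by
  rw [← orderIsoENNReal.isLUB_image', ← range_comp]
  have h := isLUB_iSup (f := fun q : {q : ℚ≥0 // ((q : ℝ≥0) : ℝ≥0∞) ≤ orderIsoENNReal x} =>
    ((q.1 : ℝ≥0) : ℝ≥0∞))
  rw [ENNReal.iSup_nnratCast_le_eq] at h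
  simpa only [Function.comp_def, orderIsoENNReal_toNNLowerReal] using h

theorem OmegaContinuous.ext_toNNLowerReal {F G : NNLowerReal → NNLowerReal}
    (hF : OmegaContinuous F) (hG : OmegaContinuous G) (h : ∀ q : ℚ≥0, F q.toNNLowerReal = G q.toNNLowerReal)
    (x : NNLowerReal) : F x = G x := by
  set S := range fun q : {q : ℚ≥0 // ((q : ℝ≥0) : ℝ≥0∞) ≤ orderIsoENNReal x} =>
    q.1.toNNLowerReal
  have : Nonempty {q : ℚ≥0 // ((q : ℝ≥0) : ℝ≥0∞) ≤ orderIsoENNReal x} := ⟨⟨0, by simp⟩⟩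
  have hdir : DirectedOn (· ≤ ·) S := directedOn_range.2 <| Monotone.directed_le fun q q' h => by
    rw [← orderIsoENNReal.le_iff_le, orderIsoENNReal_toNNLowerReal, orderIsoENNReal_toNNLowerReal]
    exact_mod_cast h
  have hlub : ∀ {H : NNLowerReal → NNLowerReal}, OmegaContinuous H →
      IsLUB (orderIsoENNReal '' (H '' S)) (orderIsoENNReal (H x)) := fun hH =>
    orderIsoENNReal.isLUB_image'.2
      (hH.2 S x (countable_range _) (range_nonempty _) hdir (isLUB_range_toNNLowerReal x))
  have hFG : F '' S = G '' S := by simp only [S, ← range_comp, Function.comp_def, h]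
  apply orderIsoENNReal.injective
  exact (hlub hF).unique (hFG ▸ hlub hG)

theorem omegaContinuous_conj_of_map_sSup {φ : ℝ≥0∞ → ℝ≥0∞} (hmono : Monotone φ)
    (hsup : ∀ s : Set ℝ≥0∞, s.Nonempty → φ (sSup s) = ⨆ a ∈ s, φ a) :
    OmegaContinuous fun x => orderIsoENNReal.symm (φ (orderIsoENNReal x)) := by
  refine ⟨fun x y h => orderIsoENNReal.symm.monotone (hmono (orderIsoENNReal.monotone h)),
    fun U x _ hne _ hx => ?_⟩
  rw [← orderIsoENNReal.isLUB_image', image_image]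
  simp only [OrderIso.apply_symm_apply]
  have hsSup : sSup (orderIsoENNReal '' U) = orderIsoENNReal x :=
    isLUB_iff_sSup_eq.1 (orderIsoENNReal.isLUB_image'.2 hx)
  rw [← hsSup, hsup _ (hne.image _), ← sSup_image, image_image]
  exact isLUB_sSup _

theorem AddSpecNN.apply_eq {add : NNLowerReal → NNLowerReal → NNLowerReal}
    (hadd : AddSpecNN add) (x y : NNLowerReal) :
    add x y = orderIsoENNReal.symm (orderIsoENNReal x + orderIsoENNReal y) := by
  have hrat : ∀ (q : ℚ≥0) y, add q.toNNLowerReal y =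
      orderIsoENNReal.symm (orderIsoENNReal q.toNNLowerReal + orderIsoENNReal y) :=
    fun q => OmegaContinuous.ext_toNNLowerReal (hadd.1 _)
      (omegaContinuous_conj_of_map_sSup (fun _ _ h => add_le_add_right h _)
        fun _ hs => ENNReal.add_sSup hs)
      fun q' => by
        rw [hadd.2.2, orderIsoENNReal.eq_symm_apply]
        change orderIsoENNReal (q + q').toNNLowerReal = _
        simp only [orderIsoENNReal_toNNLowerReal]
        push_cast
        rfl
  exact OmegaContinuous.ext_toNNLowerReal (hadd.2.1 y)
    (omegaContinuous_conj_of_map_sSup (fun _ _ h => add_le_add_left h _)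
      fun _ hs => ENNReal.sSup_add hs)
    (fun q => hrat q y) x

noncomputable def lowerIntegralENNReal {X : Type} (I : (X → NNLowerReal) → NNLowerReal)
    (h : X → ℝ≥0∞) : ℝ≥0∞ :=
  orderIsoENNReal (I fun x => orderIsoENNReal.symm (h x))

theorem IsLowerIntegral.isENNLowerIntegral {X : Type}
    {add : NNLowerReal → NNLowerReal → NNLowerReal} (hadd : AddSpecNN add)
    {I : (X → NNLowerReal) → NNLowerReal} (hI : IsLowerIntegral add I) :
    IsENNLowerIntegral (lowerIntegralENNReal I) where
  map_zero := by
    have h0 : orderIsoENNReal.symm 0 = zeroNN :=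
      orderIsoENNReal.symm_apply_eq.2 orderIsoENNReal_zeroNN.symm
    simp only [lowerIntegralENNReal, Pi.zero_apply, h0, hI.2.1, orderIsoENNReal_zeroNN]
  map_add f g := by
    simp only [lowerIntegralENNReal, Pi.add_apply]
    have hsum : (fun x => orderIsoENNReal.symm (f x + g x)) =
        fun x => add (orderIsoENNReal.symm (f x)) (orderIsoENNReal.symm (g x)) := by
      simp only [hadd.apply_eq, OrderIso.apply_symm_apply]
    rw [hsum, hI.2.2, hadd.apply_eq, OrderIso.apply_symm_apply]
  mono _ _ h := orderIsoENNReal.monotone (hI.1.1 fun x => orderIsoENNReal.symm.monotone (h x))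
  map_iSup u hu := by
    have hlub : IsLUB (range fun i x => orderIsoENNReal.symm (u i x))
        fun x => orderIsoENNReal.symm (⨆ i, u i x) := isLUB_pi.2 fun x => by
      have himage : Function.eval x '' range (fun i x => orderIsoENNReal.symm (u i x)) =
          orderIsoENNReal.symm '' range fun i => u i x := by
        rw [← range_comp, ← range_comp]
        rfl
      rw [himage]
      exact orderIsoENNReal.symm.isLUB_image'.2 isLUB_iSup
    have hdir : DirectedOn (· ≤ ·) (range fun i x => orderIsoENNReal.symm (u i x)) :=
      directedOn_range.2 (hu.mono_comp (g := fun v x => orderIsoENNReal.symm (v x)) _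
        fun _ _ h x => orderIsoENNReal.symm.monotone (h x))
    have hI_lub := orderIsoENNReal.isLUB_image'.2
      (hI.1.2 _ _ (countable_range _) (range_nonempty _) hdir hlub)
    rw [← range_comp, ← range_comp, isLUB_iff_sSup_eq, sSup_range] at hI_lub
    simp only [lowerIntegralENNReal, iSup_apply]
    exact hI_lub.symm

theorem exists_iUnion_prod_eq_of_product_topology {A B : Type}
    (hprod : ∀ (W : A × B → Sierp) (C : Set (A × B → Sierp)),
      (∀ (U : A → Sierp) (V : B → Sierp), rectangle U V ∈ C) →
        (∀ c : ℕ → (A × B → Sierp), (∀ n, c n ∈ C) →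
          (fun ab => Sierp.joinSeq (fun n => c n ab)) ∈ C) →
          W ∈ C)
    (S : Set (A × B)) : ∃ (U : ℕ → Set A) (V : ℕ → Set B), S = ⋃ n, U n ×ˢ V n := by
  refine hprod (fun ab => ⟨ab ∈ S, InS.of_classical _⟩)
    {W | ∃ (U : ℕ → Set A) (V : ℕ → Set B), {ab | (W ab).1} = ⋃ n, U n ×ˢ V n}
    (fun U V => ⟨fun _ => {a | (U a).1}, fun _ => {b | (V b).1}, ?_⟩) (fun c hc => ?_)
  · rw [iUnion_const]
    rfl
  · choose U V hUV using hc
    refine ⟨fun k => U k.unpair.1 k.unpair.2, fun k => V k.unpair.1 k.unpair.2, ?_⟩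
    rw [iUnion_unpair fun i j => U i j ×ˢ V i j]
    simp only [Sierp.joinSeq, ofPred_exists, hUV]

/-- Fubini: if `𝓘`, `𝓙` are lower integrals on `A`, `B`, and `A × B`
carries the product topology — i.e. `𝒪(A × B)` is the least collection of opens
containing all rectangles and closed under enumerable joins — then the two iterated
integrals agree for every `f : A × B → ℝ_l⁺`. -/
theorem fubini {A B : Type}
    (add : NNLowerReal → NNLowerReal → NNLowerReal) (hadd : AddSpecNN add)
    (hprod : ∀ (W : A × B → Sierp) (C : Set (A × B → Sierp)),
      (∀ (U : A → Sierp) (V : B → Sierp), rectangle U V ∈ C) →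
        (∀ c : ℕ → (A × B → Sierp), (∀ n, c n ∈ C) →
          (fun ab => Sierp.joinSeq (fun n => c n ab)) ∈ C) →
          W ∈ C)
    (I : (A → NNLowerReal) → NNLowerReal) (J : (B → NNLowerReal) → NNLowerReal)
    (hI : IsLowerIntegral add I) (hJ : IsLowerIntegral add J) :
    ∀ f : A × B → NNLowerReal,
      I (fun a => J (fun b => f (a, b))) = J (fun b => I (fun a => f (a, b))) := by
  intro f
  have h := (hI.isENNLowerIntegral hadd).iterate_comm (hJ.isENNLowerIntegral hadd)
    (exists_iUnion_prod_eq_of_product_topology hprod) fun ab => orderIsoENNReal (f ab)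
  simp only [lowerIntegralENNReal, OrderIso.symm_apply_apply] at h
  exact orderIsoENNReal.injective h
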